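/- Let Ω ∈ ℝ^{p×d} be a frame with lower frame bound A > 0 and let M ∈ ℝ^{m×d} satisfy the ℓ₂-stable Ω-null space property of order s with constant 0 < ρ < 1. Then for any x ∈ ℝ^d, any minimizer x̂ of ‖Ωz‖₁ subject to Mz = Mx satisfies ‖x − x̂‖₂ ≤ (2(1+ρ)²/(√A(1−ρ)))·σ_s(Ωx)₁/√s. -/
import Mathlib


noncomputable section

def l1 {n : ℕ} (v : Fin n → ℝ) : ℝ := ∑ i, |v i|

def l2 {n : ℕ} (v : Fin n → ℝ) : ℝ := Real.sqrt (∑ i, (v i) ^ 2)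

def l1S {n : ℕ} (v : Fin n → ℝ) (Λ : Finset (Fin n)) : ℝ := ∑ i ∈ Λ, |v i|

def l2S {n : ℕ} (v : Fin n → ℝ) (Λ : Finset (Fin n)) : ℝ :=
  Real.sqrt (∑ i ∈ Λ, (v i) ^ 2)

def mulVec' {m d : ℕ} (M : Fin m → Fin d → ℝ) (x : Fin d → ℝ) : Fin m → ℝ :=
  fun i => ∑ j, M i j * x j

def l2StableOmegaNSP {m d p : ℕ} (M : Fin m → Fin d → ℝ) (Ω : Fin p → Fin d → ℝ)
    (s : ℕ) (ρ : ℝ) : Prop :=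
  ∀ Λ : Finset (Fin p), p - s ≤ Λ.card →
    ∀ v : Fin d → ℝ, mulVec' M v = 0 →
      l2S (mulVec' Ω v) Λᶜ ≤ ρ / Real.sqrt s * l1S (mulVec' Ω v) Λ

def sigma1 {n : ℕ} (u : Fin n → ℝ) (s : ℕ) : ℝ :=
  sInf {r : ℝ | ∃ w : Fin n → ℝ,
    (Finset.univ.filter (fun i => w i ≠ 0)).card ≤ s ∧ r = l1 (u - w)}

/- Auxiliary lemmas -/

lemma mulVec'_sub {m d : ℕ} (M : Fin m → Fin d → ℝ) (x y : Fin d → ℝ) :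
    mulVec' M (x - y) = mulVec' M x - mulVec' M y := by
  funext i
  simp [mulVec', mul_sub, Finset.sum_sub_distrib]

lemma l1S_nonneg {n : ℕ} (v : Fin n → ℝ) (S : Finset (Fin n)) : 0 ≤ l1S v S :=
  Finset.sum_nonneg fun i _ => abs_nonneg _

lemma l2S_nonneg {n : ℕ} (v : Fin n → ℝ) (S : Finset (Fin n)) : 0 ≤ l2S v S :=
  Real.sqrt_nonneg _

lemma l1_nonneg {n : ℕ} (v : Fin n → ℝ) : 0 ≤ l1 v :=
  Finset.sum_nonneg fun i _ => abs_nonneg _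

lemma l2_nonneg {n : ℕ} (v : Fin n → ℝ) : 0 ≤ l2 v := Real.sqrt_nonneg _

lemma l1_split {n : ℕ} (v : Fin n → ℝ) (S : Finset (Fin n)) :
    l1 v = l1S v S + l1S v Sᶜ :=
  (Finset.sum_add_sum_compl S _).symm

lemma l1S_le_l1 {n : ℕ} (v : Fin n → ℝ) (S : Finset (Fin n)) : l1S v S ≤ l1 v :=
  Finset.sum_le_sum_of_subset_of_nonneg (Finset.subset_univ S)
    (fun i _ _ => abs_nonneg _)

lemma l2_split_le {n : ℕ} (v : Fin n → ℝ) (S : Finset (Fin n)) :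
    l2 v ≤ l2S v S + l2S v Sᶜ := by
  unfold l2 l2S
  rw [← Finset.sum_add_sum_compl S]
  have ha : (0:ℝ) ≤ ∑ i ∈ S, v i ^ 2 := Finset.sum_nonneg fun i _ => sq_nonneg _
  have hb : (0:ℝ) ≤ ∑ i ∈ Sᶜ, v i ^ 2 := Finset.sum_nonneg fun i _ => sq_nonneg _
  have h := Real.sqrt_le_sqrt (show (∑ i ∈ S, v i ^ 2) + ∑ i ∈ Sᶜ, v i ^ 2 ≤
      (Real.sqrt (∑ i ∈ S, v i ^ 2) + Real.sqrt (∑ i ∈ Sᶜ, v i ^ 2)) ^ 2 by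
    nlinarith [Real.sq_sqrt ha, Real.sq_sqrt hb, Real.sqrt_nonneg (∑ i ∈ S, v i ^ 2),
      Real.sqrt_nonneg (∑ i ∈ Sᶜ, v i ^ 2)])
  rwa [Real.sqrt_sq (by positivity)] at h

lemma l1S_cauchy {n : ℕ} (v : Fin n → ℝ) (S : Finset (Fin n)) :
    l1S v S ≤ Real.sqrt S.card * l2S v S := by
  have h := Finset.sum_mul_sq_le_sq_mul_sq S (fun _ => (1:ℝ)) (fun i => |v i|)
  simp only [one_mul, one_pow, Finset.sum_const, nsmul_eq_mul, mul_one, sq_abs] at h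
  have h2 : l1S v S = Real.sqrt ((l1S v S) ^ 2) := (Real.sqrt_sq (l1S_nonneg v S)).symm
  rw [h2]
  unfold l2S
  rw [← Real.sqrt_mul (by positivity)]
  exact Real.sqrt_le_sqrt h

lemma l1S_sub_le {n : ℕ} (a b : Fin n → ℝ) (S : Finset (Fin n)) :
    l1S a S - l1S b S ≤ l1S (a - b) S := by
  unfold l1S
  rw [← Finset.sum_sub_distrib]
  exact Finset.sum_le_sum fun i _ => by
    have := abs_sub_abs_le_abs_sub (a i) (b i)
    simpa using this

lemma l1S_neg {n : ℕ} (a : Fin n → ℝ) (S : Finset (Fin n)) : l1S (-a) S = l1S a S := by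
  simp [l1S]

lemma exists_max_set {p : ℕ} (v : Fin p → ℝ) (k : ℕ) (hk : k ≤ p) :
    ∃ S : Finset (Fin p), S.card = k ∧ ∀ j ∉ S, ∀ i ∈ S, |v j| ≤ |v i| := by
  have hne : (Finset.powersetCard k (Finset.univ : Finset (Fin p))).Nonempty :=
    Finset.powersetCard_nonempty.2 (by simpa using hk)
  obtain ⟨S, hSmem, hmax⟩ :=
    Finset.exists_max_image (Finset.powersetCard k Finset.univ)
      (fun T => ∑ i ∈ T, |v i|) hne
  rw [Finset.mem_powersetCard] at hSmem
  refine ⟨S, hSmem.2, ?_⟩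
  intro j hj i hi
  by_contra hlt
  push_neg at hlt
  set S' := insert j (S.erase i) with hS'
  have hjni : j ∉ S.erase i := fun h => hj (Finset.mem_of_mem_erase h)
  have hcard' : S'.card = k := by
    have hk1 : 1 ≤ k := hSmem.2 ▸ Finset.card_pos.mpr ⟨i, hi⟩
    rw [hS', Finset.card_insert_of_notMem hjni, Finset.card_erase_of_mem hi, hSmem.2]
    omega
  have hS'mem : S' ∈ Finset.powersetCard k Finset.univ := by
    rw [Finset.mem_powersetCard]
    exact ⟨Finset.subset_univ _, hcard'⟩
  have hsum : ∑ i ∈ S, |v i| < ∑ i' ∈ S', |v i'| := by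
    rw [hS', Finset.sum_insert hjni]
    have := Finset.sum_erase_add S (fun i => |v i|) hi
    linarith
  exact absurd (hmax S' hS'mem) (not_le.2 hsum)

lemma tail_l2_le {p : ℕ} (v : Fin p → ℝ) (S : Finset (Fin p)) (k : ℕ)
    (hcard : S.card = k) (hk : 1 ≤ k)
    (hmax : ∀ j ∉ S, ∀ i ∈ S, |v j| ≤ |v i|) :
    l2S v Sᶜ ≤ l1 v / Real.sqrt k := by
  have hkpos : (0:ℝ) < k := by exact_mod_cast hk
  have hbound : ∀ j ∈ Sᶜ, |v j| ≤ l1 v / k := by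
    intro j hj
    have hj' : j ∉ S := Finset.mem_compl.mp hj
    have h1 : (k:ℝ) * |v j| ≤ l1S v S := by
      have : ∑ i ∈ S, |v j| ≤ ∑ i ∈ S, |v i| :=
        Finset.sum_le_sum fun i hi => hmax j hj' i hi
      simpa [Finset.sum_const, hcard, l1S] using this
    have h2 : l1S v S ≤ l1 v := l1S_le_l1 v S
    rw [le_div_iff₀ hkpos]
    linarith
  have hsum : ∑ j ∈ Sᶜ, v j ^ 2 ≤ (l1 v / k) * l1 v := by
    calc ∑ j ∈ Sᶜ, v j ^ 2 = ∑ j ∈ Sᶜ, |v j| * |v j| := by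
          refine Finset.sum_congr rfl fun j _ => ?_
          rw [← sq_abs (v j)]; ring
      _ ≤ ∑ j ∈ Sᶜ, (l1 v / k) * |v j| :=
          Finset.sum_le_sum fun j hj =>
            mul_le_mul_of_nonneg_right (hbound j hj) (abs_nonneg _)
      _ = (l1 v / k) * l1S v Sᶜ := by rw [← Finset.mul_sum]; rfl
      _ ≤ (l1 v / k) * l1 v :=
          mul_le_mul_of_nonneg_left (l1S_le_l1 v Sᶜ)
            (div_nonneg (l1_nonneg v) hkpos.le)
  have : l2S v Sᶜ ≤ Real.sqrt ((l1 v / k) * l1 v) := Real.sqrt_le_sqrt hsum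
  have heq : Real.sqrt ((l1 v / k) * l1 v) = l1 v / Real.sqrt k := by
    rw [show (l1 v / k) * l1 v = (l1 v)^2 / k by ring, Real.sqrt_div (sq_nonneg _),
      Real.sqrt_sq (l1_nonneg v)]
  rwa [heq] at this

theorem l2_stable_nsp_recovery {m d p s : ℕ}
    (M : Fin m → Fin d → ℝ) (Ω : Fin p → Fin d → ℝ) (A ρ : ℝ)
    (hA : 0 < A)
    (hframe : ∀ v : Fin d → ℝ, A * (l2 v) ^ 2 ≤ (l2 (mulVec' Ω v)) ^ 2)
    (hρ0 : 0 < ρ) (hρ1 : ρ < 1) (hs : 1 ≤ s)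
    (hNSP : l2StableOmegaNSP M Ω s ρ)
    (x xhat : Fin d → ℝ)
    (hfeas : mulVec' M xhat = mulVec' M x)
    (hmin : ∀ z : Fin d → ℝ, mulVec' M z = mulVec' M x →
      l1 (mulVec' Ω xhat) ≤ l1 (mulVec' Ω z)) :
    l2 (x - xhat) ≤
      2 * (1 + ρ) ^ 2 / (Real.sqrt A * (1 - ρ)) * (sigma1 (mulVec' Ω x) s / Real.sqrt s) := by
  set u := mulVec' Ω x with hu
  set uh := mulVec' Ω xhat with huh
  set v := x - xhat with hv
  set w := mulVec' Ω v with hwv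
  have hwdef : w = u - uh := by rw [hwv, hv, mulVec'_sub]
  have hMv : mulVec' M v = 0 := by rw [hv, mulVec'_sub, hfeas, sub_self]
  have hsA : (0:ℝ) < Real.sqrt A := Real.sqrt_pos.2 hA
  have hss : (0:ℝ) < Real.sqrt s := Real.sqrt_pos.2 (by exact_mod_cast hs)
  have h1ρ : (0:ℝ) < 1 - ρ := by linarith
  -- Step A : frame bound
  have hA2 : Real.sqrt A * l2 v ≤ l2 w := by
    have h := hframe v
    have h' := Real.sqrt_le_sqrt h
    rwa [Real.sqrt_mul hA.le, Real.sqrt_sq (l2_nonneg v), Real.sqrt_sq (l2_nonneg w)] at h'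
  -- Step C : l2 w ≤ (1+ρ)/√s * l1 w
  have hC : l2 w ≤ (1 + ρ) / Real.sqrt s * l1 w := by
    by_cases hps : p ≤ s
    · have hnsp := hNSP ∅ (by simp [Nat.sub_eq_zero_of_le hps]) v hMv
      rw [← hwv] at hnsp
      have h0 : l1S w (∅ : Finset (Fin p)) = 0 := by simp [l1S]
      rw [h0, mul_zero, Finset.compl_empty] at hnsp
      have : l2 w ≤ 0 := hnsp
      refine le_trans this (mul_nonneg (by positivity) (l1_nonneg w))
    · push_neg at hps
      obtain ⟨S, hScard, hSmax⟩ := exists_max_set w s hps.le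
      have hcompl : Sᶜ.card = p - s := by
        rw [Finset.card_compl, hScard]; simp
      have hnsp := hNSP Sᶜ (le_of_eq hcompl.symm) v hMv
      rw [← hwv, compl_compl] at hnsp
      have htail : l2S w Sᶜ ≤ l1 w / Real.sqrt s :=
        tail_l2_le w S s hScard hs hSmax
      have hsplit := l2_split_le w S
      have hle : l1S w Sᶜ ≤ l1 w := l1S_le_l1 w Sᶜ
      have hρs : (0:ℝ) ≤ ρ / Real.sqrt s := by positivity
      have : l2 w ≤ ρ / Real.sqrt s * l1 w + l1 w / Real.sqrt s := by
        have := mul_le_mul_of_nonneg_left hle hρs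
        linarith
      calc l2 w ≤ ρ / Real.sqrt s * l1 w + l1 w / Real.sqrt s := this
        _ = (1 + ρ) / Real.sqrt s * l1 w := by field_simp; ring
  -- Step B : for any T with card ≤ s
  have hB : ∀ T : Finset (Fin p), T.card ≤ s →
      l1 w ≤ 2 * (1 + ρ) / (1 - ρ) * l1S u Tᶜ := by
    intro T hT
    have hcompl : p - s ≤ Tᶜ.card := by
      rw [Finset.card_compl]
      simp only [Fintype.card_fin]
      omega
    have hnsp := hNSP Tᶜ hcompl v hMv
    rw [← hwv, compl_compl] at hnsp
    have hT1 : l1S w T ≤ ρ * l1S w Tᶜ := by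
      have hc := l1S_cauchy w T
      have hcard : Real.sqrt T.card ≤ Real.sqrt s := Real.sqrt_le_sqrt (by exact_mod_cast hT)
      have h2 : Real.sqrt T.card * l2S w T ≤ Real.sqrt s * l2S w T :=
        mul_le_mul_of_nonneg_right hcard (l2S_nonneg w T)
      have h3 : Real.sqrt s * l2S w T ≤ Real.sqrt s * (ρ / Real.sqrt s * l1S w Tᶜ) :=
        mul_le_mul_of_nonneg_left hnsp hss.le
      have h4 : Real.sqrt s * (ρ / Real.sqrt s * l1S w Tᶜ) = ρ * l1S w Tᶜ := by
        field_simp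
      linarith
    have hmin' : l1 uh ≤ l1 u := hmin x rfl
    have huw : u - w = uh := by rw [hwdef]; abel
    have e1 : l1S u T - l1S w T ≤ l1S uh T := by
      have := l1S_sub_le u w T
      rwa [huw] at this
    have e2 : l1S w Tᶜ - l1S u Tᶜ ≤ l1S uh Tᶜ := by
      have h := l1S_sub_le w u Tᶜ
      have : w - u = -uh := by rw [hwdef]; abel
      rwa [this, l1S_neg] at h
    have hsplitu := l1_split u T
    have hsplituh := l1_split uh T
    have key : (1 - ρ) * l1S w Tᶜ ≤ 2 * l1S u Tᶜ := by nlinarith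
    have hsplitw := l1_split w T
    have hw1 : l1 w ≤ (1 + ρ) * l1S w Tᶜ := by nlinarith
    rw [div_mul_eq_mul_div, le_div_iff₀ h1ρ]
    nlinarith [l1S_nonneg w Tᶜ, l1S_nonneg u Tᶜ]
  -- Final assembly
  set σ := sigma1 u s with hσ
  set c := 2 * (1 + ρ) ^ 2 / (Real.sqrt A * (1 - ρ)) / Real.sqrt s with hc
  have hcpos : 0 < c := by rw [hc]; positivity
  have hkey : ∀ r ∈ {r : ℝ | ∃ w' : Fin p → ℝ,
      (Finset.univ.filter (fun i => w' i ≠ 0)).card ≤ s ∧ r = l1 (u - w')},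
      l2 v ≤ c * r := by
    rintro r ⟨w', hw'card, hr⟩
    set T := Finset.univ.filter (fun i => w' i ≠ 0) with hT
    have hr' : l1S u Tᶜ ≤ r := by
      have heq : l1S u Tᶜ = l1S (u - w') Tᶜ := by
        refine Finset.sum_congr rfl fun i hi => ?_
        have : w' i = 0 := by
          by_contra hne
          exact (Finset.mem_compl.mp hi) (by simp [hT, hne])
        simp [this]
      rw [hr, heq]
      exact l1S_le_l1 _ _
    have hchain : Real.sqrt A * l2 v ≤
        (1 + ρ) / Real.sqrt s * (2 * (1 + ρ) / (1 - ρ) * r) := by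
      have h1 := hB T hw'card
      have h2 : l1 w ≤ 2 * (1 + ρ) / (1 - ρ) * r := by
        refine le_trans h1 (mul_le_mul_of_nonneg_left hr' (by positivity))
      have h3 : l2 w ≤ (1 + ρ) / Real.sqrt s * (2 * (1 + ρ) / (1 - ρ) * r) :=
        le_trans hC (mul_le_mul_of_nonneg_left h2 (by positivity))
      linarith
    have : l2 v ≤ (1 + ρ) / Real.sqrt s * (2 * (1 + ρ) / (1 - ρ) * r) / Real.sqrt A := by
      rw [le_div_iff₀ hsA]
      linarith [hchain]
    refine le_trans this (le_of_eq ?_)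
    rw [hc]
    field_simp
  have hne : {r : ℝ | ∃ w' : Fin p → ℝ,
      (Finset.univ.filter (fun i => w' i ≠ 0)).card ≤ s ∧ r = l1 (u - w')}.Nonempty := by
    exact ⟨l1 u, 0, by simp, by simp⟩
  have hinf : l2 v / c ≤ σ := by
    rw [hσ]
    unfold sigma1
    refine le_csInf hne fun r hr => ?_
    rw [div_le_iff₀ hcpos]
    have := hkey r hr
    linarith [this]
  have hfin : l2 v ≤ c * σ := by
    rw [div_le_iff₀ hcpos] at hinf
    linarith [hinf]
  calc l2 v ≤ c * σ := hfin
    _ = 2 * (1 + ρ) ^ 2 / (Real.sqrt A * (1 - ρ)) * (σ / Real.sqrt s) := by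
        rw [hc]; ring
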